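/- arXiv:1904.06537 — 7 statements merged into one kernel-verified Lean document; each statement's English description precedes it below -/
import Mathlib

section
/- Let $m\in\{1,2\}$ and $\mu\in(-1,0)$. Then the radicand $\big(1+\tfrac m2(1+\mu)\big)^2-2m(1+\mu)^2$ is strictly positive, and the numbers $\lambda_\pm=\tfrac12\Big[\big(1+\tfrac m2(1+\mu)\big)\pm\sqrt{\big(1+\tfrac m2(1+\mu)\big)^2-2m(1+\mu)^2}\Big]$ satisfy $0<\lambda_-<\lambda_+$. -/
/-- The radicand in the eigenvalue formula is strictly positive and the eigenvalues
`λ₋, λ₊` at the critical point `P_w` satisfy `0 < λ₋ < λ₊`. -/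
theorem eigenvalues_positive
    (m : ℕ) (hm : m = 1 ∨ m = 2) (μ : ℝ) (hμ : μ ∈ Set.Ioo (-1 : ℝ) 0) :
    0 < (1 + (m : ℝ) / 2 * (1 + μ)) ^ 2 - 2 * m * (1 + μ) ^ 2 ∧
    0 < (1 / 2) * ((1 + (m : ℝ) / 2 * (1 + μ))
      - Real.sqrt ((1 + (m : ℝ) / 2 * (1 + μ)) ^ 2 - 2 * m * (1 + μ) ^ 2)) ∧
    (1 / 2) * ((1 + (m : ℝ) / 2 * (1 + μ))
      - Real.sqrt ((1 + (m : ℝ) / 2 * (1 + μ)) ^ 2 - 2 * m * (1 + μ) ^ 2))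
    < (1 / 2) * ((1 + (m : ℝ) / 2 * (1 + μ))
      + Real.sqrt ((1 + (m : ℝ) / 2 * (1 + μ)) ^ 2 - 2 * m * (1 + μ) ^ 2)) := by
  obtain ⟨h1, h2⟩ := hμ
  have ht0 : (0 : ℝ) < 1 + μ := by linarith
  have ht1 : 1 + μ < 1 := by linarith
  have hrad : 0 < (1 + (m : ℝ) / 2 * (1 + μ)) ^ 2 - 2 * m * (1 + μ) ^ 2 := by
    rcases hm with h | h <;> subst h <;> push_cast <;>
      nlinarith [mul_pos ht0 (sub_pos.mpr ht1)]
  have hb : (0 : ℝ) < 1 + (m : ℝ) / 2 * (1 + μ) := by positivity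
  have hlt : Real.sqrt ((1 + (m : ℝ) / 2 * (1 + μ)) ^ 2 - 2 * m * (1 + μ) ^ 2)
      < 1 + (m : ℝ) / 2 * (1 + μ) := by
    rw [Real.sqrt_lt' hb]
    have : (0:ℝ) < 2 * m * (1 + μ) ^ 2 := by
      have : (0:ℝ) < (m:ℝ) := by rcases hm with h | h <;> simp [h]
      positivity
    linarith
  have hs : 0 < Real.sqrt ((1 + (m : ℝ) / 2 * (1 + μ)) ^ 2 - 2 * m * (1 + μ) ^ 2) :=
    Real.sqrt_pos.mpr hrad
  exact ⟨hrad, by linarith, by linarith⟩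
end

section
/- Let $m\in\{1,2\}$ and $\mu\in(-1,0)$, and define $\lambda_\pm=\tfrac12\Big[\big(1+\tfrac m2(1+\mu)\big)\pm\sqrt{\big(1+\tfrac m2(1+\mu)\big)^2-2m(1+\mu)^2}\Big]$. Then $1-\lambda_+<0$ and $-\mu<1-\lambda_-<1$. -/
lemma slopes_aux (c : ℝ) (hc : c = 1 ∨ c = 2) (μ : ℝ) (h1 : -1 < μ) (h2 : μ < 0)
    (lamPlus lamMinus : ℝ)
    (hplus : lamPlus = (1 / 2) * ((1 + c / 2 * (1 + μ))
      + Real.sqrt ((1 + c / 2 * (1 + μ)) ^ 2 - 2 * c * (1 + μ) ^ 2)))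
    (hminus : lamMinus = (1 / 2) * ((1 + c / 2 * (1 + μ))
      - Real.sqrt ((1 + c / 2 * (1 + μ)) ^ 2 - 2 * c * (1 + μ) ^ 2))) :
    1 - lamPlus < 0 ∧ -μ < 1 - lamMinus ∧ 1 - lamMinus < 1 := by
  set s := Real.sqrt ((1 + c / 2 * (1 + μ)) ^ 2 - 2 * c * (1 + μ) ^ 2) with hs
  have hDpos : (0:ℝ) ≤ s := Real.sqrt_nonneg _
  have hD : (0:ℝ) < (1 + c / 2 * (1 + μ)) ^ 2 - 2 * c * (1 + μ) ^ 2 := by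
    rcases hc with rfl | rfl <;> nlinarith [sq_nonneg (1 + μ), sq_nonneg μ, mul_pos (neg_pos.mpr h2) (by linarith : (0:ℝ) < 1 + μ)]
  have hsq : s ^ 2 = (1 + c / 2 * (1 + μ)) ^ 2 - 2 * c * (1 + μ) ^ 2 :=
    Real.sq_sqrt hD.le
  subst hplus hminus
  rcases hc with rfl | rfl
  · exact ⟨by nlinarith [sq_nonneg (s - (1 - (1:ℝ)/2*(1+μ)))],
      by nlinarith [sq_nonneg (s + (1 + (1:ℝ)/2*(1+μ)) - 2*(1+μ))],
      by nlinarith [sq_nonneg s]⟩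
  · exact ⟨by nlinarith [sq_nonneg (s - (1 - (2:ℝ)/2*(1+μ)))],
      by nlinarith [sq_nonneg (s + (1 + (2:ℝ)/2*(1+μ)) - 2*(1+μ))],
      by nlinarith [sq_nonneg s]⟩

/-- The slopes `1 - λ₊` and `1 - λ₋` of the solution directions at the critical point
`P_w` satisfy `1 - λ₊ < 0` and `-μ < 1 - λ₋ < 1`. -/
theorem slopes_at_critical_point
    (m : ℕ) (hm : m = 1 ∨ m = 2) (μ : ℝ) (hμ : μ ∈ Set.Ioo (-1 : ℝ) 0)
    (lamPlus lamMinus : ℝ)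
    (hplus : lamPlus = (1 / 2) * ((1 + (m : ℝ) / 2 * (1 + μ))
      + Real.sqrt ((1 + (m : ℝ) / 2 * (1 + μ)) ^ 2 - 2 * m * (1 + μ) ^ 2)))
    (hminus : lamMinus = (1 / 2) * ((1 + (m : ℝ) / 2 * (1 + μ))
      - Real.sqrt ((1 + (m : ℝ) / 2 * (1 + μ)) ^ 2 - 2 * m * (1 + μ) ^ 2))) :
    1 - lamPlus < 0 ∧ -μ < 1 - lamMinus ∧ 1 - lamMinus < 1 := by
  refine slopes_aux (m : ℝ) ?_ μ hμ.1 hμ.2 lamPlus lamMinus hplus hminus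
  rcases hm with rfl | rfl <;> norm_num
end

section
/- Let $a>0$, $m\in\{1,2\}$, $\beta\in(-m,0)$, $\mu=\beta/m$, $\xi_{\mathrm w}=-\frac{am}{m+\beta}$. Suppose $U:(-\infty,\xi_{\mathrm w})\to\mathbb{R}$ is differentiable, satisfies $\big((U(\xi)-\xi)^2-a^2\big)U'(\xi)=a^2\big(\beta+\tfrac{mU(\xi)}{\xi}\big)$ for all $\xi<\xi_{\mathrm w}$, and $U(\xi)>-\mu\xi$ for all $\xi<\xi_{\mathrm w}$. Then the limit $\lim_{\xi\to-\infty}U(\xi)$ exists and is finite. -/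
/-!
In the region `𝒰` the numerator of the ODE is negative and `U - ξ > a`, so `U' < 0` and `U`
increases as `ξ → -∞`. For `ξ ≤ 2 ξ_w` one even has `U - ξ > 2a`, and completing the square
in the numerator gives `U' ≥ -C / ξ²`. Hence `U - C / ξ` is nondecreasing there, which bounds
`U` from above; a monotone bounded function has a limit.
-/

open Filter Topology Set

theorem AntitoneOn.exists_tendsto_atBot_of_bddAbove {f : ℝ → ℝ} {x₀ : ℝ}
    (hf : AntitoneOn f (Iic x₀)) (hbdd : BddAbove (f '' Iic x₀)) :
    ∃ L, Tendsto f atBot (𝓝 L) := by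
  set g : ℝ → ℝ := fun x ↦ f (min x x₀)
  have hg : Antitone g := fun x y hxy ↦
    hf (min_le_right x x₀) (min_le_right y x₀) (min_le_min_right x₀ hxy)
  have hgbdd : BddAbove (range g) :=
    hbdd.mono (range_subset_iff.2 fun x ↦ mem_image_of_mem f (min_le_right x x₀))
  refine ⟨⨆ x, g x, (tendsto_atBot_ciSup hg hgbdd).congr' ?_⟩
  filter_upwards [eventually_le_atBot x₀] with x hx
  simp only [g, min_eq_left hx]

theorem exists_tendsto_atBot_of_neg_div_sq_le_deriv_nonpos {f : ℝ → ℝ} {x₀ C : ℝ}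
    (hx₀ : x₀ < 0) (hf : ∀ x ≤ x₀, DifferentiableAt ℝ f x)
    (hderiv : ∀ x ≤ x₀, -C / x ^ 2 ≤ deriv f x ∧ deriv f x ≤ 0) :
    ∃ L, Tendsto f atBot (𝓝 L) := by
  have hC : 0 ≤ C := by
    by_contra! hC
    have : 0 < -C / x₀ ^ 2 := div_pos (neg_pos.2 hC) (sq_pos_of_neg hx₀)
    linarith [hderiv x₀ le_rfl]
  have hcont : ContinuousOn f (Iic x₀) := fun x hx ↦ (hf x hx).continuousAt.continuousWithinAt
  have hanti : AntitoneOn f (Iic x₀) := by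
    refine antitoneOn_of_deriv_nonpos (convex_Iic x₀) hcont ?_ ?_ <;> rw [interior_Iic]
    · exact fun x hx ↦ (hf x hx.le).differentiableWithinAt
    · exact fun x hx ↦ (hderiv x hx.le).2
  have hmono : MonotoneOn (fun x ↦ f x - C * x⁻¹) (Iic x₀) := by
    have hg : ∀ x ≤ x₀, HasDerivAt (fun x ↦ f x - C * x⁻¹) (deriv f x + C / x ^ 2) x := by
      intro x hx
      exact ((hf x hx).hasDerivAt.sub ((hasDerivAt_inv (by linarith)).const_mul C)).congr_deriv
        (by ring)
    refine monotoneOn_of_deriv_nonneg (convex_Iic x₀)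
      (fun x hx ↦ (hg x hx).continuousAt.continuousWithinAt) ?_ ?_ <;> rw [interior_Iic]
    · exact fun x hx ↦ (hg x hx.le).differentiableAt.differentiableWithinAt
    · intro x hx
      rw [(hg x hx.le).deriv]
      linarith [(hderiv x hx.le).1, neg_div (x ^ 2) C]
  refine hanti.exists_tendsto_atBot_of_bddAbove ⟨f x₀ - C * x₀⁻¹, ?_⟩
  rintro _ ⟨x, hx, rfl⟩
  have h₁ : f x - C * x⁻¹ ≤ f x₀ - C * x₀⁻¹ := hmono hx self_mem_Iic hx
  have h₂ : C * x⁻¹ ≤ 0 :=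
    mul_nonpos_of_nonneg_of_nonpos hC (inv_nonpos.2 (by linarith [mem_Iic.1 hx]))
  linarith

noncomputable def similarityRHS (a m β ξ U : ℝ) : ℝ :=
  a ^ 2 * (β + m * U / ξ) / ((U - ξ) ^ 2 - a ^ 2)

section

variable {a m β ξ U : ℝ}

theorem eq_similarityRHS_of_mul_eq {d : ℝ}
    (h : ((U - ξ) ^ 2 - a ^ 2) * d = a ^ 2 * (β + m * U / ξ)) (hD : (U - ξ) ^ 2 - a ^ 2 ≠ 0) :
    d = similarityRHS a m β ξ U :=
  eq_div_of_mul_eq hD (by rw [mul_comm, h])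

theorem similarityRHS_nonpos (hξ : ξ < 0) (hU : -β * ξ < m * U) (hs : a ^ 2 ≤ (U - ξ) ^ 2) :
    similarityRHS a m β ξ U ≤ 0 := by
  have : m * U / ξ < -β := by rw [div_lt_iff_of_neg hξ]; linarith
  exact div_nonpos_of_nonpos_of_nonneg
    (mul_nonpos_of_nonneg_of_nonpos (sq_nonneg a) (by linarith)) (by linarith)

theorem neg_div_sq_le_similarityRHS (hmβ : 0 < m + β) (hξ : ξ ≠ 0)
    (hs : 2 * a ^ 2 < (U - ξ) ^ 2) :
    -(a ^ 2 * m ^ 2 / (m + β)) / ξ ^ 2 ≤ similarityRHS a m β ξ U := by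
  have hD : (U - ξ) ^ 2 / 2 < (U - ξ) ^ 2 - a ^ 2 := by linarith
  rw [similarityRHS, div_le_div_iff₀ (by positivity) (by nlinarith [sq_nonneg (U - ξ)])]
  have hN : a ^ 2 * (β + m * U / ξ) * ξ ^ 2
      = a ^ 2 * ((m + β) * ξ ^ 2 + m * (U - ξ) * ξ) := by
    field_simp
    ring
  -- completing the square: `(m + β) ξ² + m s ξ ≥ -m² s² / (4 (m + β))` with `s = U - ξ`
  have key : -(m ^ 2 * ((U - ξ) ^ 2 - a ^ 2))
      ≤ (m + β) * ((m + β) * ξ ^ 2 + m * (U - ξ) * ξ) := by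
    nlinarith [sq_nonneg ((m + β) * ξ + m * (U - ξ) / 2),
      mul_le_mul_of_nonneg_left hD.le (sq_nonneg m)]
  rw [hN]
  convert mul_le_mul_of_nonneg_left key (div_nonneg (sq_nonneg a) hmβ.le) using 1
  · ring
  · field_simp

theorem two_mul_lt_sub_of_le (hm : 0 < m) (hmβ : 0 < m + β)
    (hξ : ξ ≤ 2 * (-(a * m) / (m + β))) (hU : -β * ξ < m * U) : 2 * a < U - ξ := by
  have hξ' : (m + β) * ξ ≤ -(2 * a * m) := by
    have := mul_le_mul_of_nonneg_left hξ hmβ.le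
    rwa [mul_left_comm, mul_div_cancel₀ _ hmβ.ne', mul_neg, ← mul_assoc] at this
  nlinarith

end

theorem finite_limit_at_minus_infinity_general
    (a : ℝ) (ha : 0 < a) (m : ℕ)
    (β : ℝ) (hβ : β ∈ Set.Ioo (-(m : ℝ)) 0)
    (μ : ℝ) (hμ : μ = β / m)
    (ξw : ℝ) (hξw : ξw = -(a * m) / (m + β))
    (U : ℝ → ℝ)
    (hdiff : ∀ ξ < ξw, DifferentiableAt ℝ U ξ)
    (hode : ∀ ξ < ξw, ((U ξ - ξ) ^ 2 - a ^ 2) * deriv U ξ = a ^ 2 * (β + m * U ξ / ξ))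
    (hreg : ∀ ξ < ξw, -μ * ξ < U ξ) :
    ∃ L : ℝ, Filter.Tendsto U Filter.atBot (nhds L) := by
  obtain ⟨hβm, hβ0⟩ := hβ
  have hm : (0 : ℝ) < m := by linarith
  have hmβ : 0 < (m : ℝ) + β := by linarith
  have hξw0 : ξw < 0 := hξw ▸ div_neg_of_neg_of_pos (by nlinarith) hmβ
  refine exists_tendsto_atBot_of_neg_div_sq_le_deriv_nonpos (x₀ := 2 * ξw)
    (C := a ^ 2 * m ^ 2 / (m + β)) (by linarith)
    (fun ξ hξ ↦ hdiff ξ (by linarith)) fun ξ hξ ↦ ?_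
  have hξ' : ξ < ξw := by linarith
  have hU : -β * ξ < m * U ξ := by
    have := mul_lt_mul_of_pos_left (hreg ξ hξ') hm
    rwa [hμ, ← mul_assoc, mul_neg, mul_div_cancel₀ _ hm.ne'] at this
  have hs : 2 * a < U ξ - ξ := two_mul_lt_sub_of_le hm hmβ (hξw ▸ hξ) hU
  have hs2 : 2 * a ^ 2 < (U ξ - ξ) ^ 2 := by nlinarith
  rw [eq_similarityRHS_of_mul_eq (hode ξ hξ') (by nlinarith)]
  exact ⟨neg_div_sq_le_similarityRHS hmβ (by linarith) hs2,
    similarityRHS_nonpos (by linarith) hU (by nlinarith)⟩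

/-- Any solution of the similarity ODE whose graph lies in the region
`𝒰 = {ξ < ξ_w, U > -μξ}` tends to a finite limit as `ξ → -∞`. -/
theorem finite_limit_at_minus_infinity
    (a : ℝ) (ha : 0 < a) (m : ℕ) (hm : m = 1 ∨ m = 2)
    (β : ℝ) (hβ : β ∈ Set.Ioo (-(m : ℝ)) 0)
    (μ : ℝ) (hμ : μ = β / m)
    (ξw : ℝ) (hξw : ξw = -(a * m) / (m + β))
    (U : ℝ → ℝ)
    (hdiff : ∀ ξ < ξw, DifferentiableAt ℝ U ξ)
    (hode : ∀ ξ < ξw, ((U ξ - ξ) ^ 2 - a ^ 2) * deriv U ξ = a ^ 2 * (β + m * U ξ / ξ))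
    (hreg : ∀ ξ < ξw, -μ * ξ < U ξ) :
    ∃ L : ℝ, Filter.Tendsto U Filter.atBot (nhds L) :=
  finite_limit_at_minus_infinity_general a ha m β hβ μ hμ ξw hξw U hdiff hode hreg
end

section
/- Let $a>0$, $m\in\{1,2\}$, $\beta\in(-m,0)$, $\mu=\beta/m$, $\xi_{\mathrm w}=-\frac{am}{m+\beta}$, $U_{\mathrm w}=\frac{a\beta}{m+\beta}$. Suppose $U:(-\infty,\xi_{\mathrm w})\to\mathbb{R}$ is differentiable, satisfies $\big((U(\xi)-\xi)^2-a^2\big)U'(\xi)=a^2\big(\beta+\tfrac{mU(\xi)}{\xi}\big)$ for all $\xi<\xi_{\mathrm w}$, $U(\xi)>-\mu\xi$ and $U(\xi)>U_{\mathrm w}$ for all $\xi<\xi_{\mathrm w}$, and $\lim_{\xi\to\xi_{\mathrm w}^-}U(\xi)=U_{\mathrm w}$. Then the limit $U^*:=\lim_{\xi\to-\infty}U(\xi)$ exists and satisfies $U^*< U_{\mathrm w}+a^2m\int_{-\infty}^{\xi_{\mathrm w}}\frac{d\xi}{\xi\,(\xi-(a+U_{\mathrm w}))}$. -/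
open MeasureTheory Set Filter Topology

/-!
Rewriting the ODE as `-U' = a²m (U + μξ) / ((-ξ)((U - ξ)² - a²))`, the constraint `ξ < ξ_w`
gives `U + μξ < U - ξ - a` and the constraint `U > U_w` gives `a + U_w - ξ < U - ξ + a`, so
`-U' < g(ξ) = a²m / (ξ(ξ - (a + U_w)))`, which is positive and integrable at `-∞`.
Hence `V(ξ) = U(ξ) - ∫_ξ^{ξ_w} g` is strictly increasing and bounded below, so `V` and with it
`U` converge at `-∞`. The limit `U* - ∫_{-∞}^{ξ_w} g` of `V` lies strictly below the values of
`V` near `ξ_w`, and these are at most `U_w` since `V ≤ U`.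
-/

lemma MonotoneOn.exists_tendsto_atBot {V : ℝ → ℝ} {b : ℝ} (hV : MonotoneOn V (Iio b))
    (hbdd : BddBelow (V '' Iio b)) : ∃ L, Tendsto V atBot (𝓝 L) := by
  have hmem : ∀ x, min x (b - 1) ∈ Iio b := fun x =>
    (min_le_right x (b - 1)).trans_lt (sub_one_lt b)
  have hW : Monotone fun x => V (min x (b - 1)) := fun x y hxy =>
    hV (hmem x) (hmem y) (min_le_min_right _ hxy)
  obtain ⟨d, hd⟩ := hbdd
  refine ⟨_, (tendsto_atBot_ciInf hW ⟨d, ?_⟩).congr' ?_⟩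
  · rintro _ ⟨x, rfl⟩
    exact hd (mem_image_of_mem V (hmem x))
  · filter_upwards [eventually_le_atBot (b - 1)] with x hx
    rw [min_eq_left hx]

section Majorant

variable {f g : ℝ → ℝ} {b : ℝ}

lemma strictMonoOn_sub_intervalIntegral (hf : ∀ x < b, DifferentiableAt ℝ f x)
    (hg : ContinuousOn g (Iio b)) (hgi : IntegrableOn g (Iic b))
    (hfg : ∀ x < b, -deriv f x < g x) :
    StrictMonoOn (fun x => f x - ∫ t in x..b, g t) (Iio b) := by
  have hderiv : ∀ x < b,
      HasDerivAt (fun x => f x - ∫ t in x..b, g t) (deriv f x + g x) x := by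
    intro x hx
    have hint : IntervalIntegrable g volume x b :=
      (hgi.mono_set (by rw [uIcc_of_le hx.le]; exact Icc_subset_Iic_self)).intervalIntegrable
    have hG := intervalIntegral.integral_hasDerivAt_left hint
      (hg.stronglyMeasurableAtFilter isOpen_Iio x hx) (hg.continuousAt (Iio_mem_nhds hx))
    simpa only [sub_neg_eq_add] using (hf x hx).hasDerivAt.fun_sub hG
  refine strictMonoOn_of_hasDerivWithinAt_pos (f' := fun x => deriv f x + g x) (convex_Iio b)
    (fun x hx => (hderiv x hx).continuousAt.continuousWithinAt) (fun x hx => ?_) (fun x hx => ?_)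
  all_goals rw [interior_Iio] at hx
  · exact (hderiv x hx).hasDerivWithinAt
  · linarith [hfg x hx]

theorem exists_tendsto_atBot_lt_add_integral_Iic {c : ℝ}
    (hf : ∀ x < b, DifferentiableAt ℝ f x) (hg : ContinuousOn g (Iio b))
    (hgi : IntegrableOn g (Iic b)) (hg0 : ∀ x ≤ b, 0 ≤ g x)
    (hfg : ∀ x < b, -deriv f x < g x) (hbdd : BddBelow (f '' Iio b))
    (hlim : Tendsto f (𝓝[<] b) (𝓝 c)) :
    ∃ L, Tendsto f atBot (𝓝 L) ∧ L < c + ∫ x in Iic b, g x := by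
  set V := fun x => f x - ∫ t in x..b, g t
  have hVmono := strictMonoOn_sub_intervalIntegral hf hg hgi hfg
  have hint_le : ∀ x ≤ b, ∫ t in x..b, g t ≤ ∫ t in Iic b, g t := fun x hx => by
    rw [intervalIntegral.integral_of_le hx]
    exact setIntegral_mono_set hgi
      ((ae_restrict_iff' measurableSet_Iic).2 (.of_forall hg0)) Ioc_subset_Iic_self.eventuallyLE
  have hVbdd : BddBelow (V '' Iio b) := by
    obtain ⟨d, hd⟩ := hbdd
    refine ⟨d - ∫ t in Iic b, g t, ?_⟩
    rintro _ ⟨x, hx, rfl⟩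
    linarith [hd (mem_image_of_mem f hx), hint_le x (le_of_lt hx)]
  obtain ⟨L, hL⟩ := hVmono.monotoneOn.exists_tendsto_atBot hVbdd
  have hfL : Tendsto f atBot (𝓝 (L + ∫ t in Iic b, g t)) := by
    refine (hL.add (intervalIntegral_tendsto_integral_Iic b hgi tendsto_id)).congr fun x => ?_
    simp only [id, sub_add_cancel]
  refine ⟨_, hfL, ?_⟩
  have hL_le : L ≤ V (b - 2) := by
    refine le_of_tendsto hL ?_
    filter_upwards [eventually_le_atBot (b - 2)] with y hy
    exact hVmono.monotoneOn (by simp only [mem_Iio]; linarith) (by simp) hy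
  have hV_lt : V (b - 2) < V (b - 1) := hVmono (by simp) (by simp) (by linarith)
  have hV_le : V (b - 1) ≤ c := by
    refine ge_of_tendsto hlim ?_
    filter_upwards [Ioo_mem_nhdsLT (sub_one_lt b)] with y hy
    have hint_nonneg : 0 ≤ ∫ t in y..b, g t :=
      intervalIntegral.integral_nonneg hy.2.le fun t ht => hg0 t ht.2
    linarith [hVmono.monotoneOn (by simp) hy.2 hy.1.le]
  linarith

end Majorant

lemma critical_point_sub_eq {a m β ξw Uw : ℝ} (hmβ : m + β ≠ 0)
    (hξw : ξw = -(a * m) / (m + β)) (hUw : Uw = a * β / (m + β)) : Uw - ξw = a := by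
  rw [hUw, hξw]; field_simp; ring

lemma critical_point_neg {a m β ξw : ℝ} (ha : 0 < a) (hm : 0 < m) (hβ : -m < β)
    (hξw : ξw = -(a * m) / (m + β)) : ξw < 0 := by
  rw [hξw]; exact div_neg_of_neg_of_pos (by nlinarith) (by linarith)

lemma mul_sub_pos_of_le {x b k : ℝ} (hb : b < 0) (hbk : b < k) (hx : x ≤ b) :
    0 < x * (x - k) :=
  mul_pos_of_neg_of_neg (by linarith) (by linarith)

lemma integrableOn_Iic_inv_mul_sub {b k : ℝ} (hb : b < 0) (hbk : b < k) :
    IntegrableOn (fun x => (x * (x - k))⁻¹) (Iic b) := by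
  have hcont : ContinuousOn (fun x => (x * (x - k))⁻¹) (Iic b) :=
    ContinuousOn.inv₀ (by fun_prop) fun x hx => (mul_sub_pos_of_le hb hbk hx).ne'
  refine (hcont.locallyIntegrableOn measurableSet_Iic).integrableOn_of_isBigO_atBot
    (Asymptotics.IsBigO.of_bound 2 ?_) (integrable_inv_one_add_sq.integrableAtFilter atBot)
  filter_upwards [eventually_le_atBot (min (-1) (2 * k - 1))] with x hx
  have h1 : x ≤ -1 := hx.trans (min_le_left _ _)
  have h2 : x ≤ 2 * k - 1 := hx.trans (min_le_right _ _)
  have hsq : 1 + x ^ 2 ≤ 2 * (x * (x - k)) := by nlinarith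
  rw [norm_inv, norm_inv, Real.norm_of_nonneg (by nlinarith), Real.norm_of_nonneg (by positivity)]
  calc (x * (x - k))⁻¹ ≤ ((1 + x ^ 2) / 2)⁻¹ := inv_anti₀ (by positivity) (by linarith)
    _ = 2 * (1 + x ^ 2)⁻¹ := by rw [inv_div, div_eq_mul_inv]

lemma neg_lt_of_isothermal_ode {a m β ξw Uw ξ u u' : ℝ}
    (ha : 0 < a) (hm : 0 < m) (hβ : -m < β)
    (hξw : ξw = -(a * m) / (m + β)) (hUw : Uw = a * β / (m + β))
    (hξ : ξ < ξw) (hreg : -(β / m) * ξ < u) (habove : Uw < u)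
    (hode : ((u - ξ) ^ 2 - a ^ 2) * u' = a ^ 2 * (β + m * u / ξ)) :
    -u' < a ^ 2 * m * (ξ * (ξ - (a + Uw)))⁻¹ := by
  have hξ0 : ξ < 0 := hξ.trans (critical_point_neg ha hm hβ hξw)
  obtain ⟨μ, rfl⟩ : ∃ μ, β = μ * m := ⟨β / m, by field_simp⟩
  rw [mul_div_cancel_right₀ _ hm.ne'] at hreg
  have hμ : 0 < 1 + μ := by nlinarith
  have haξw : (1 + μ) * ξw = -a := by rw [hξw]; field_simp [hμ.ne']
  have hnξ : 0 < -ξ := by linarith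
  have hnum : 0 < u + μ * ξ := by linarith
  have hnum_lt : u + μ * ξ < u - ξ - a := by linarith [mul_lt_mul_of_pos_left hξ hμ]
  have hUwξw := critical_point_sub_eq (by nlinarith) hξw hUw
  have hk : 0 < a + Uw - ξ := by linarith
  have hk_lt : a + Uw - ξ < u - ξ + a := by linarith
  have hprod : (u + μ * ξ) * (a + Uw - ξ) < (u - ξ) ^ 2 - a ^ 2 := by
    nlinarith [mul_lt_mul'' hnum_lt hk_lt hnum.le hk.le]
  have hD : 0 < (u - ξ) ^ 2 - a ^ 2 := hprod.trans' (by positivity)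
  have hode' : ((u - ξ) ^ 2 - a ^ 2) * u' * ξ = a ^ 2 * m * (u + μ * ξ) := by
    rw [hode]; field_simp [hξ0.ne]; ring
  have hu' : -u' = a ^ 2 * m * (u + μ * ξ) / (-ξ * ((u - ξ) ^ 2 - a ^ 2)) := by
    rw [eq_div_iff (by positivity)]
    linear_combination hode'
  have hc : 0 < a ^ 2 * m * -ξ := by positivity
  rw [hu', show ξ * (ξ - (a + Uw)) = -ξ * (a + Uw - ξ) by ring, ← div_eq_mul_inv,
    div_lt_div_iff₀ (by positivity) (by positivity)]
  nlinarith [mul_lt_mul_of_pos_left hprod hc]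

/-- The kink-solution's limit `U*` at `ξ = -∞` exists and satisfies the integral bound
`U* < U_w + a²m ∫_{-∞}^{ξ_w} dξ/(ξ(ξ-(a+U_w)))`. -/
theorem kink_solution_limit_bound
    (a : ℝ) (ha : 0 < a) (m : ℕ) (hm : m = 1 ∨ m = 2)
    (β : ℝ) (hβ : β ∈ Set.Ioo (-(m : ℝ)) 0)
    (μ : ℝ) (hμ : μ = β / m)
    (ξw Uw : ℝ) (hξw : ξw = -(a * m) / (m + β)) (hUw : Uw = a * β / (m + β))
    (U : ℝ → ℝ)
    (hdiff : ∀ ξ < ξw, DifferentiableAt ℝ U ξ)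
    (hode : ∀ ξ < ξw, ((U ξ - ξ) ^ 2 - a ^ 2) * deriv U ξ = a ^ 2 * (β + m * U ξ / ξ))
    (hreg : ∀ ξ < ξw, -μ * ξ < U ξ)
    (habove : ∀ ξ < ξw, Uw < U ξ)
    (hlim : Filter.Tendsto U (nhdsWithin ξw (Set.Iio ξw)) (nhds Uw)) :
    ∃ Ustar : ℝ, Filter.Tendsto U Filter.atBot (nhds Ustar) ∧
      Ustar < Uw + a ^ 2 * m * ∫ ξ in Set.Iic ξw, (ξ * (ξ - (a + Uw)))⁻¹ := by
  subst hμ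
  have hm0 : (0 : ℝ) < m := by rcases hm with rfl | rfl <;> norm_num
  have hξw0 : ξw < 0 := critical_point_neg ha hm0 hβ.1 hξw
  have hk : ξw < a + Uw := by
    linarith [critical_point_sub_eq (by linarith [hβ.1]) hξw hUw]
  have hpos : ∀ ξ ≤ ξw, 0 < ξ * (ξ - (a + Uw)) := fun ξ => mul_sub_pos_of_le hξw0 hk
  obtain ⟨L, hL, hLlt⟩ := exists_tendsto_atBot_lt_add_integral_Iic
    (g := fun ξ => a ^ 2 * m * (ξ * (ξ - (a + Uw)))⁻¹) hdiff
    (continuousOn_const.mul (.inv₀ (by fun_prop) fun ξ hξ => (hpos ξ (le_of_lt hξ)).ne'))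
    ((integrableOn_Iic_inv_mul_sub hξw0 hk).const_mul _)
    (fun ξ hξ => by have := hpos ξ hξ; positivity)
    (fun ξ hξ =>
      neg_lt_of_isothermal_ode ha hm0 hβ.1 hξw hUw hξ (hreg ξ hξ) (habove ξ hξ) (hode ξ hξ))
    ⟨Uw, by rintro _ ⟨ξ, hξ, rfl⟩; exact (habove ξ hξ).le⟩ hlim
  exact ⟨L, hL, by rwa [integral_const_mul] at hLlt⟩
end

section
/- Let $a>0$, $m=1$, $\beta=-\frac12$, so $\mu=\beta/m=-\frac12$, $\xi_{\mathrm w}=-2a$ and $U_{\mathrm w}=-a$. Suppose $U:(-\infty,\xi_{\mathrm w})\to\mathbb{R}$ is differentiable, satisfies $\big((U(\xi)-\xi)^2-a^2\big)U'(\xi)=a^2\big(\beta+\tfrac{mU(\xi)}{\xi}\big)$ for all $\xi<\xi_{\mathrm w}$, $U(\xi)>-\mu\xi$ and $U(\xi)>U_{\mathrm w}$ for all $\xi<\xi_{\mathrm w}$, and $\lim_{\xi\to\xi_{\mathrm w}^-}U(\xi)=U_{\mathrm w}$. Then the limit $U^*:=\lim_{\xi\to-\infty}U(\xi)$ exists and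 satisfies $U^*<0$. -/
/-- In the case `m = 1`, `β = -1/2` (so `ξ_w = -2a`, `U_w = -a`, `μ = -1/2`), the
kink-solution's limit `U*` at `ξ = -∞` exists and is strictly negative. -/
theorem kink_limit_negative_concrete_case
    (a : ℝ) (ha : 0 < a)
    (m : ℕ) (hm : m = 1) (β : ℝ) (hβ : β = -1/2)
    (μ : ℝ) (hμ : μ = β / m)
    (ξw Uw : ℝ) (hξw : ξw = -2 * a) (hUw : Uw = -a)
    (U : ℝ → ℝ)
    (hdiff : ∀ ξ < ξw, DifferentiableAt ℝ U ξ)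
    (hode : ∀ ξ < ξw, ((U ξ - ξ) ^ 2 - a ^ 2) * deriv U ξ = a ^ 2 * (β + m * U ξ / ξ))
    (hreg : ∀ ξ < ξw, -μ * ξ < U ξ)
    (habove : ∀ ξ < ξw, Uw < U ξ)
    (hlim : Filter.Tendsto U (nhdsWithin ξw (Set.Iio ξw)) (nhds Uw)) :
    ∃ Ustar : ℝ, Filter.Tendsto U Filter.atBot (nhds Ustar) ∧ Ustar < 0 := by
  subst hm hβ hμ hξw hUw
  set c : ℝ := -2 * a with hc
  have hc0 : c < 0 := by simp only [hc]; linarith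
  have hcne : c ≠ 0 := ne_of_lt hc0
  -- basic facts at each point ξ < c
  have hV : ∀ ξ < c, 0 < U ξ - ξ / 2 := by
    intro ξ hξ
    have := hreg ξ hξ
    norm_num at this
    linarith
  have hD : ∀ ξ < c, 0 < (U ξ - ξ) ^ 2 - a ^ 2 := by
    intro ξ hξ
    have hv := hV ξ hξ
    have h1 : 0 < U ξ - ξ - a := by simp only [hc] at hξ; linarith
    have h2 : 0 < U ξ - ξ + a := by simp only [hc] at hξ; linarith
    nlinarith [mul_pos h1 h2]
  have hDV : ∀ ξ < c, 0 ≤ ((U ξ - ξ) ^ 2 - a ^ 2) + ξ * (U ξ - ξ / 2) := by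
    intro ξ hξ
    have hv := hV ξ hξ
    have hξa : ξ < -2 * a := by rw [← hc]; exact hξ
    nlinarith [sq_nonneg (U ξ - ξ / 2),
      mul_pos (show (0:ℝ) < -(ξ - 2 * a) by linarith) (show (0:ℝ) < -(ξ + 2 * a) by linarith)]
  -- the ODE in a cleaner form
  have hode' : ∀ ξ < c, ((U ξ - ξ) ^ 2 - a ^ 2) * deriv U ξ * ξ = a ^ 2 * (U ξ - ξ / 2) := by
    intro ξ hξ
    have hξ0 : ξ ≠ 0 := ne_of_lt (lt_trans hξ hc0)
    have h := hode ξ hξ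
    rw [h]
    push_cast
    field_simp
    ring
  -- derivative bounds
  have hderiv_le : ∀ ξ < c, deriv U ξ ≤ 0 := by
    intro ξ hξ
    by_contra hpos
    push_neg at hpos
    have hξ0 : ξ < 0 := lt_trans hξ hc0
    have h := hode' ξ hξ
    have h1 : ((U ξ - ξ) ^ 2 - a ^ 2) * deriv U ξ * ξ < 0 :=
      mul_neg_of_pos_of_neg (mul_pos (hD ξ hξ) hpos) hξ0
    have h2 : 0 < a ^ 2 * (U ξ - ξ / 2) := mul_pos (pow_pos ha 2) (hV ξ hξ)
    linarith
  have hderiv_ge : ∀ ξ < c, -(a ^ 2 / ξ ^ 2) ≤ deriv U ξ := by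
    intro ξ hξ
    have hξ0 : ξ < 0 := lt_trans hξ hc0
    have hξsq : 0 < ξ ^ 2 := pow_two_pos_of_ne_zero (ne_of_lt hξ0)
    have hd := hD ξ hξ
    rw [neg_div' , div_le_iff₀ hξsq]
    refine le_of_mul_le_mul_right ?_ hd
    have hcalc : deriv U ξ * ξ ^ 2 * ((U ξ - ξ) ^ 2 - a ^ 2)
        = (((U ξ - ξ) ^ 2 - a ^ 2) * deriv U ξ * ξ) * ξ := by ring
    rw [hcalc, hode' ξ hξ]
    nlinarith [mul_nonneg (sq_nonneg a) (hDV ξ hξ)]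
  -- U is antitone on Iio c
  have hUanti : AntitoneOn U (Set.Iio c) := by
    refine antitoneOn_of_deriv_nonpos (convex_Iio c)
      (fun x hx => (hdiff x hx).continuousAt.continuousWithinAt)
      (fun x hx => ?_) (fun x hx => ?_)
    · rw [interior_Iio] at hx
      exact (hdiff x hx).differentiableWithinAt
    · rw [interior_Iio] at hx
      exact hderiv_le x hx
  -- F := U - a²·(·)⁻¹ is monotone on Iio c
  have hF : ∀ ξ ∈ Set.Iio c, HasDerivAt (fun x => U x - a ^ 2 * x⁻¹)
      (deriv U ξ - a ^ 2 * (-(ξ ^ 2)⁻¹)) ξ := by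
    intro ξ hξ
    have hξ0 : ξ ≠ 0 := ne_of_lt (lt_trans hξ hc0)
    exact ((hdiff ξ hξ).hasDerivAt).sub ((hasDerivAt_inv hξ0).const_mul (a ^ 2))
  have hFmono : MonotoneOn (fun x => U x - a ^ 2 * x⁻¹) (Set.Iio c) := by
    refine monotoneOn_of_deriv_nonneg (convex_Iio c)
      (fun x hx => (hF x hx).continuousAt.continuousWithinAt)
      (fun x hx => ?_) (fun x hx => ?_)
    · rw [interior_Iio] at hx
      exact (hF x hx).differentiableAt.differentiableWithinAt
    · rw [interior_Iio] at hx
      rw [(hF x hx).deriv]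
      have hx0 : x < 0 := lt_trans hx hc0
      have hxsq : 0 < x ^ 2 := pow_two_pos_of_ne_zero (ne_of_lt hx0)
      have := hderiv_ge x hx
      have h2 : a ^ 2 * (-(x ^ 2)⁻¹) = -(a ^ 2 / x ^ 2) := by
        field_simp
      rw [h2]
      linarith
  -- bound: U ξ' ≤ -a/2 for all ξ' < c
  have hbound : ∀ ξ' < c, U ξ' ≤ -a / 2 := by
    intro ξ' hξ'
    have hξ'0 : ξ' < 0 := lt_trans hξ' hc0
    have hξ'ne : ξ' ≠ 0 := ne_of_lt hξ'0
    have hinv : Filter.Tendsto (fun ξ : ℝ => a ^ 2 * ξ⁻¹) (nhdsWithin c (Set.Iio c))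
        (nhds (a ^ 2 * c⁻¹)) :=
      (((continuousAt_inv₀ hcne).tendsto).mono_left nhdsWithin_le_nhds).const_mul (a ^ 2)
    have hF_lim : Filter.Tendsto (fun ξ => U ξ - a ^ 2 * ξ⁻¹) (nhdsWithin c (Set.Iio c))
        (nhds (-a - a ^ 2 * c⁻¹)) := hlim.sub hinv
    have hev : ∀ᶠ ξ in nhdsWithin c (Set.Iio c),
        U ξ' - a ^ 2 * ξ'⁻¹ ≤ U ξ - a ^ 2 * ξ⁻¹ := by
      filter_upwards [Ioo_mem_nhdsLT_of_mem (show c ∈ Set.Ioc ξ' c from ⟨hξ', le_refl c⟩)]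
        with ξ hξ
      exact hFmono hξ' hξ.2 (le_of_lt hξ.1)
    have hle : U ξ' - a ^ 2 * ξ'⁻¹ ≤ -a - a ^ 2 * c⁻¹ := ge_of_tendsto hF_lim hev
    have hcval : -a - a ^ 2 * c⁻¹ = -a / 2 := by
      rw [hc]
      field_simp
      ring
    have hneg : a ^ 2 * ξ'⁻¹ < 0 :=
      mul_neg_of_pos_of_neg (pow_pos ha 2) (inv_neg''.mpr hξ'0)
    rw [hcval] at hle
    linarith
  -- assemble the limit
  set g : ℝ → ℝ := fun ξ => U (min ξ (c - 1)) with hg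
  have hmem : ∀ x : ℝ, min x (c - 1) < c := fun x =>
    lt_of_le_of_lt (min_le_right _ _) (by linarith)
  have hganti : Antitone g := by
    intro x y hxy
    exact hUanti (hmem x) (hmem y) (min_le_min hxy (le_refl _))
  have hgbdd : BddAbove (Set.range g) := by
    refine ⟨-a / 2, ?_⟩
    rintro _ ⟨x, rfl⟩
    exact hbound _ (hmem x)
  have hgt : Filter.Tendsto g Filter.atBot (nhds (⨆ i, g i)) :=
    tendsto_atBot_ciSup hganti hgbdd
  refine ⟨⨆ i, g i, ?_, ?_⟩
  · refine hgt.congr' ?_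
    filter_upwards [Filter.eventually_le_atBot (c - 1)] with x hx
    simp only [hg, min_eq_left hx]
  · have : (⨆ i, g i) ≤ -a / 2 := ciSup_le fun i => hbound _ (hmem i)
    linarith
end

section
/- Let $a>0$, $m\in\{1,2\}$, $\beta\in(-m,0)$, $\xi_{\mathrm w}=-\frac{am}{m+\beta}$. Suppose $U:(-\infty,\xi_{\mathrm w}]\to\mathbb{R}$ is differentiable and bounded, satisfies $(U(\xi)-\xi)^2>a^2$ for all $\xi\le\xi_{\mathrm w}$, and $\big((U(\xi)-\xi)^2-a^2\big)U'(\xi)=a^2\big(\beta+\tfrac{mU(\xi)}{\xi}\big)$ for all $\xi\le\xi_{\mathrm w}$. Define $F(\xi):=-\frac{1}{a^2}(U(\xi)-\xi)U'(\xi)$. Then there exists a constant $C>0$ such that $\big|F(\xi)-\frac{\beta}{\xi}\big|\le\frac{C}{\xi^{2}}$ for all $\xi\le\xi_{\mathrm w}$. -/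
private lemma density_aux_N (μ a β M ξ u : ℝ) (hμ : 0 < μ) (hβ0 : β < 0)
    (hβm : -β ≤ μ - β) (hM0 : 0 ≤ M) (hu1 : -M ≤ u) (hu2 : u ≤ M)
    (ha : 0 < a) (hξ1 : 1 ≤ -ξ) (huξ : 0 ≤ u - ξ) :
    |β * a^2 - μ * u * (u - ξ)| ≤ ((μ - β) * a^2 + μ * M^2 + μ * M) * (-ξ) := by
  rw [abs_le]
  have hp1 : 0 ≤ μ * ((M + u) * (u - ξ)) :=
    mul_nonneg hμ.le (mul_nonneg (by linarith) huξ)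
  have hp2 : 0 ≤ μ * ((M - u) * (u - ξ)) :=
    mul_nonneg hμ.le (mul_nonneg (by linarith) huξ)
  have hp3 : 0 ≤ μ * (M * (M - u)) :=
    mul_nonneg hμ.le (mul_nonneg hM0 (by linarith))
  have hp5 : 0 ≤ μ * M^2 * (-ξ - 1) :=
    mul_nonneg (mul_nonneg hμ.le (sq_nonneg M)) (by linarith)
  have hp6 : 0 ≤ (μ - β) * a^2 * (-ξ - 1) := by
    apply mul_nonneg (mul_nonneg (by linarith) (sq_nonneg a)) (by linarith)
  have hp7 : 0 ≤ μ * M * (-ξ - 1) :=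
    mul_nonneg (mul_nonneg hμ.le hM0) (by linarith)
  have hβa : β * a^2 ≤ 0 := mul_nonpos_of_nonpos_of_nonneg hβ0.le (sq_nonneg a)
  have hβa2 : -((μ - β) * a^2) ≤ β * a^2 := by nlinarith [sq_nonneg a]
  constructor <;> nlinarith

/-- The function `F(ξ) = -(1/a²)(U(ξ)-ξ)U'(ξ)` along a bounded, supersonic solution of
the similarity ODE on `(-∞, ξ_w]` satisfies `|F(ξ) - β/ξ| ≤ C/ξ²`. -/
theorem density_exponent_estimate
    (a : ℝ) (ha : 0 < a) (m : ℕ) (hm : m = 1 ∨ m = 2)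
    (β : ℝ) (hβ : β ∈ Set.Ioo (-(m : ℝ)) 0)
    (ξw : ℝ) (hξw : ξw = -(a * m) / (m + β))
    (U : ℝ → ℝ)
    (hdiff : ∀ ξ ≤ ξw, DifferentiableAt ℝ U ξ)
    (hbdd : ∃ M : ℝ, ∀ ξ ≤ ξw, |U ξ| ≤ M)
    (hsuper : ∀ ξ ≤ ξw, a ^ 2 < (U ξ - ξ) ^ 2)
    (hode : ∀ ξ ≤ ξw, ((U ξ - ξ) ^ 2 - a ^ 2) * deriv U ξ = a ^ 2 * (β + m * U ξ / ξ)) :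
    ∃ C : ℝ, 0 < C ∧ ∀ ξ ≤ ξw,
      |(-(1 / a ^ 2) * (U ξ - ξ) * deriv U ξ) - β / ξ| ≤ C / ξ ^ 2 := by
  obtain ⟨M, hM⟩ := hbdd
  have hM0 : 0 ≤ M := le_trans (abs_nonneg _) (hM ξw le_rfl)
  have hm1 : (1:ℝ) ≤ (m:ℝ) := by rcases hm with h | h <;> simp [h] <;> norm_num
  have hmβ : 0 < (m:ℝ) + β := by have := hβ.1; linarith
  have hβ0 : β < 0 := hβ.2
  have hξw0 : ξw < 0 := by
    rw [hξw]
    apply div_neg_of_neg_of_pos _ hmβ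
    nlinarith
  have hD : ∀ ξ ≤ ξw, 0 < (U ξ - ξ)^2 - a^2 := fun ξ h => sub_pos.2 (hsuper ξ h)
  have key : ∀ ξ ≤ ξw, (-(1 / a ^ 2) * (U ξ - ξ) * deriv U ξ) - β / ξ
      = (β*a^2 - ((m:ℝ)+β)*(U ξ)*(U ξ - ξ)) / (ξ * ((U ξ - ξ)^2 - a^2)) := by
    intro ξ h
    have hξ0 : ξ ≠ 0 := ne_of_lt (lt_of_le_of_lt h hξw0)
    have hD' : (U ξ - ξ)^2 - a^2 ≠ 0 := (hD ξ h).ne'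
    have ha0 : a ≠ 0 := ha.ne'
    have h1 : deriv U ξ = a^2*(β + (m:ℝ) * U ξ / ξ)/((U ξ - ξ)^2 - a^2) := by
      rw [eq_div_iff hD']
      linear_combination hode ξ h
    rw [h1]
    field_simp
    ring
  set R : ℝ := 2*M + 2*a + 2 with hRdef
  have hR1 : (1:ℝ) ≤ R := by simp only [hRdef]; nlinarith
  set N : ℝ → ℝ := fun ξ => β*a^2 - ((m:ℝ)+β)*(U ξ)*(U ξ - ξ) with hNdef
  set f : ℝ → ℝ := fun ξ => N ξ / (ξ * ((U ξ - ξ)^2 - a^2)) * ξ^2 with hfdef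
  have hUc : ContinuousOn U (Set.Icc (-R) ξw) := fun x hx =>
    ((hdiff x hx.2).continuousAt).continuousWithinAt
  have hcont : ContinuousOn f (Set.Icc (-R) ξw) := by
    apply ContinuousOn.mul _ ((continuousOn_id.pow 2))
    apply ContinuousOn.div
    · exact continuousOn_const.sub ((continuousOn_const.mul hUc).mul (hUc.sub continuousOn_id))
    · exact continuousOn_id.mul (((hUc.sub continuousOn_id).pow 2).sub continuousOn_const)
    · intro x hx
      have hx0 : x < 0 := lt_of_le_of_lt hx.2 hξw0
      exact mul_ne_zero (ne_of_lt hx0) (hD x hx.2).ne'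
  obtain ⟨C₂, hC₂⟩ := (isCompact_Icc).exists_bound_of_continuousOn hcont
  set C₁ : ℝ := (m:ℝ)*a^2 + ((m:ℝ)+β)*M^2 + ((m:ℝ)+β)*M with hC₁def
  have hC₁0 : 0 ≤ C₁ := by positivity
  refine ⟨max (4*C₁) C₂ + 1, by nlinarith [le_max_left (4*C₁) C₂], ?_⟩
  intro ξ h
  have hξneg : ξ < 0 := lt_of_le_of_lt h hξw0
  have hξ2 : 0 < ξ^2 := by nlinarith
  have hDpos := hD ξ h
  rw [key ξ h, le_div_iff₀ hξ2]
  have habs : |N ξ / (ξ * ((U ξ - ξ)^2 - a^2))| * ξ^2 = |f ξ| := by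
    rw [hfdef]; rw [abs_mul, abs_of_nonneg (sq_nonneg ξ)]
  rw [habs]
  rcases le_or_gt (-R) ξ with hcase | hcase
  · have := hC₂ ξ ⟨hcase, h⟩
    rw [Real.norm_eq_abs] at this
    calc |f ξ| ≤ C₂ := this
      _ ≤ max (4*C₁) C₂ + 1 := by
        have := le_max_right (4*C₁) C₂; linarith
  · -- tail: ξ < -R
    clear hcont hC₂ habs key hUc hdiff hode hsuper hD hξw hm
    have hMξ : |U ξ| ≤ M := hM ξ h
    have hU1 : -M ≤ U ξ := neg_le_of_abs_le hMξ
    have hU2 : U ξ ≤ M := le_of_abs_le hMξ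
    have hRξ : R ≤ -ξ := by linarith
    have hRξ' : 2*M + 2*a + 2 ≤ -ξ := by simp only [hRdef] at hRξ; linarith
    have hξ1 : (1:ℝ) ≤ -ξ := by linarith
    have hDge : ξ^2/4 ≤ (U ξ - ξ)^2 - a^2 := by
      have h0 : 0 ≤ -ξ - M := by linarith
      have hq : (-ξ - M)^2 ≤ (U ξ - ξ)^2 := by
        apply pow_le_pow_left₀ h0 (by linarith)
      nlinarith [hq, hM0, ha.le, hRξ', mul_nonneg hM0 ha.le]
    have hNle : |N ξ| ≤ C₁ * (-ξ) := by
      have huξ : 0 ≤ U ξ - ξ := by linarith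
      have := density_aux_N ((m:ℝ)+β) a β M ξ (U ξ) hmβ hβ0
        (by simp; linarith [hβ.1]) hM0 hU1 hU2 ha hξ1 huξ
      simp only [hNdef, hC₁def]
      convert this using 2 <;> ring
    have hf_eq : |f ξ| = |N ξ| / (-ξ * ((U ξ - ξ)^2 - a^2)) * ξ^2 := by
      simp only [hfdef]
      rw [abs_mul, abs_of_nonneg (sq_nonneg ξ), abs_div, abs_mul,
        abs_of_pos hDpos, abs_of_neg hξneg]
    rw [hf_eq]
    have hpos : 0 < -ξ * ((U ξ - ξ)^2 - a^2) := mul_pos (by linarith) hDpos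
    rw [div_mul_eq_mul_div, div_le_iff₀ hpos]
    have hcmax : 4*C₁ ≤ max (4*C₁) C₂ + 1 := by
      have := le_max_left (4*C₁) C₂; linarith
    have h1 : |N ξ| * ξ^2 ≤ (C₁ * (-ξ)) * ξ^2 :=
      mul_le_mul_of_nonneg_right hNle (sq_nonneg ξ)
    have h2 : (4*C₁*(-ξ)) * (ξ^2/4) ≤ (4*C₁*(-ξ)) * ((U ξ - ξ)^2 - a^2) :=
      mul_le_mul_of_nonneg_left hDge (mul_nonneg (by linarith) (by linarith))
    have h3 : (4*C₁) * (-ξ * ((U ξ - ξ)^2 - a^2)) ≤ (max (4*C₁) C₂ + 1) * (-ξ * ((U ξ - ξ)^2 - a^2)) :=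
      mul_le_mul_of_nonneg_right hcmax hpos.le
    calc |N ξ| * ξ^2 ≤ (C₁ * (-ξ)) * ξ^2 := h1
      _ = (4*C₁*(-ξ)) * (ξ^2/4) := by ring
      _ ≤ (4*C₁*(-ξ)) * ((U ξ - ξ)^2 - a^2) := h2
      _ = (4*C₁) * (-ξ * ((U ξ - ξ)^2 - a^2)) := by ring
      _ ≤ (max (4*C₁) C₂ + 1) * (-ξ * ((U ξ - ξ)^2 - a^2)) := h3
end

section
/- Let $m\in\mathbb{N}$ with $m\ge 1$, $\beta\in(-m,0)$, $T>0$, $K>0$, $\xi_0>0$, and let $\Omega:\mathbb{R}\to\mathbb{R}$ be measurable with $|\Omega(\xi)|\le K$ for all $\xi$ and $|\Omega(\xi)|\le K|\xi|^{\beta}$ whenever $|\xi|\ge\xi_0$. Then $\lim_{\delta\to 0^+}\ \delta^{m}\int_{-T}^{T}|t|^{\beta}\,\big|\Omega\big(\tfrac{\delta}{t}\big)\big|\,dt=0$ (the integrand being interpreted as $0$ at $t=0$; in particular the integral is finite for each $\delta>0$). -/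
open MeasureTheory

lemma flux_pointwise_bound (β K ξ0 : ℝ) (hβn : β < 0) (hK : 0 < K) (hξ0 : 0 < ξ0)
    (Ω : ℝ → ℝ) (hbdd : ∀ ξ : ℝ, |Ω ξ| ≤ K)
    (hdecay : ∀ ξ : ℝ, ξ0 ≤ |ξ| → |Ω ξ| ≤ K * |ξ| ^ β)
    (δ : ℝ) (hδ : 0 < δ) (t : ℝ) :
    |t| ^ β * |Ω (δ / t)| ≤ K * (1 + ξ0 ^ (-β)) * δ ^ β := by
  have hRpos : 0 < K * (1 + ξ0 ^ (-β)) * δ ^ β := by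
    have := Real.rpow_pos_of_pos hξ0 (-β)
    have := Real.rpow_pos_of_pos hδ β
    positivity
  rcases eq_or_ne t 0 with rfl | ht
  · simp [Real.zero_rpow hβn.ne, hRpos.le]
  have htpos : 0 < |t| := abs_pos.mpr ht
  have habs : |δ / t| = δ / |t| := by rw [abs_div, abs_of_pos hδ]
  rcases le_or_gt ξ0 (|δ / t|) with hcase | hcase
  · have h1 : |Ω (δ / t)| ≤ K * (δ / |t|) ^ β := by
      have := hdecay _ hcase; rwa [habs] at this
    have h2 : |t| ^ β * (K * (δ / |t|) ^ β) = K * δ ^ β := by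
      rw [Real.div_rpow hδ.le (abs_nonneg t)]
      field_simp
    calc |t| ^ β * |Ω (δ / t)| ≤ |t| ^ β * (K * (δ / |t|) ^ β) := by
          exact mul_le_mul_of_nonneg_left h1 (Real.rpow_nonneg (abs_nonneg t) β)
      _ = K * δ ^ β := h2
      _ ≤ K * (1 + ξ0 ^ (-β)) * δ ^ β := by
          have h3 : (1:ℝ) ≤ 1 + ξ0 ^ (-β) := by
            have := (Real.rpow_pos_of_pos hξ0 (-β)).le; linarith
          have := Real.rpow_pos_of_pos hδ β
          nlinarith
  · -- δ / |t| < ξ0, so δ / ξ0 < |t|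
    rw [habs] at hcase
    have ht2 : δ / ξ0 < |t| := (div_lt_iff₀ hξ0).mpr (by
      rw [div_lt_iff₀ htpos] at hcase; linarith [mul_comm ξ0 |t|])
    have hb : |t| ^ β ≤ (δ / ξ0) ^ β :=
      Real.rpow_le_rpow_of_nonpos (by positivity) ht2.le hβn.le
    have heq : (δ / ξ0) ^ β = δ ^ β * ξ0 ^ (-β) := by
      rw [Real.div_rpow hδ.le hξ0.le, Real.rpow_neg hξ0.le, div_eq_mul_inv]
    calc |t| ^ β * |Ω (δ / t)| ≤ (δ / ξ0) ^ β * K := by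
          apply mul_le_mul hb (hbdd _) (abs_nonneg _) (Real.rpow_nonneg (by positivity) _)
      _ = K * ξ0 ^ (-β) * δ ^ β := by rw [heq]; ring
      _ ≤ K * (1 + ξ0 ^ (-β)) * δ ^ β := by
          have := (Real.rpow_pos_of_pos hδ β).le
          nlinarith

lemma flux_integrable (β K ξ0 : ℝ) (hβn : β < 0) (hK : 0 < K) (hξ0 : 0 < ξ0)
    (T : ℝ) (Ω : ℝ → ℝ) (hmeas : Measurable Ω) (hbdd : ∀ ξ : ℝ, |Ω ξ| ≤ K)
    (hdecay : ∀ ξ : ℝ, ξ0 ≤ |ξ| → |Ω ξ| ≤ K * |ξ| ^ β)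
    (δ : ℝ) (hδ : 0 < δ) :
    IntervalIntegrable (fun t => |t| ^ β * |Ω (δ / t)|) volume (-T) T := by
  have hfm : Measurable fun t : ℝ => |t| ^ β * |Ω (δ / t)| := by
    apply Measurable.mul
    · fun_prop
    · exact (hmeas.comp (measurable_const.div measurable_id)).abs
  have hconst : IntervalIntegrable (fun _ : ℝ => K * (1 + ξ0 ^ (-β)) * δ ^ β)
      volume (-T) T := intervalIntegrable_const
  refine hconst.mono_fun' hfm.aestronglyMeasurable ?_
  filter_upwards with t
  rw [Real.norm_eq_abs, abs_of_nonneg (by positivity)]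
  exact flux_pointwise_bound β K ξ0 hβn hK hξ0 Ω hbdd hdecay δ hδ t

/-- Vanishing of the flux across spheres of radius `δ`: for a bounded profile `Ω` with
`|Ω(ξ)| ≤ K|ξ|^β` for large `|ξ|`, the flux `δ^m ∫_{-T}^T |t|^β |Ω(δ/t)| dt` is finite for
each `δ > 0` and tends to `0` as `δ → 0⁺`. -/
theorem flux_across_small_spheres_vanishes
    (m : ℕ) (hm : 1 ≤ m) (β : ℝ) (hβ : β ∈ Set.Ioo (-(m : ℝ)) 0)
    (T K ξ0 : ℝ) (hT : 0 < T) (hK : 0 < K) (hξ0 : 0 < ξ0)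
    (Ω : ℝ → ℝ) (hmeas : Measurable Ω)
    (hbdd : ∀ ξ : ℝ, |Ω ξ| ≤ K)
    (hdecay : ∀ ξ : ℝ, ξ0 ≤ |ξ| → |Ω ξ| ≤ K * |ξ| ^ β) :
    (∀ δ : ℝ, 0 < δ →
      IntervalIntegrable (fun t => |t| ^ β * |Ω (δ / t)|) MeasureTheory.volume (-T) T) ∧
    Filter.Tendsto (fun δ => δ ^ m * ∫ t in (-T)..T, |t| ^ β * |Ω (δ / t)|)
      (nhdsWithin 0 (Set.Ioi 0)) (nhds 0) := by
  obtain ⟨hβl, hβn⟩ := hβ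
  set C : ℝ := K * (1 + ξ0 ^ (-β)) with hC
  have hCpos : 0 < C := by
    have := Real.rpow_pos_of_pos hξ0 (-β); positivity
  have hint := flux_integrable β K ξ0 hβn hK hξ0 T Ω hmeas hbdd hdecay
  refine ⟨hint, ?_⟩
  have hmβ : 0 < (m : ℝ) + β := by linarith
  have hup : Filter.Tendsto (fun δ : ℝ => 2 * T * C * δ ^ ((m : ℝ) + β))
      (nhdsWithin 0 (Set.Ioi 0)) (nhds 0) := by
    have h1 : Filter.Tendsto (fun δ : ℝ => δ ^ ((m : ℝ) + β)) (nhds 0) (nhds 0) := by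
      have := (Real.continuousAt_rpow_const 0 ((m : ℝ) + β) (Or.inr hmβ.le)).tendsto
      rwa [Real.zero_rpow hmβ.ne'] at this
    have := (h1.const_mul (2 * T * C)).mono_left (nhdsWithin_le_nhds (s := Set.Ioi 0))
    simpa using this
  apply tendsto_of_tendsto_of_tendsto_of_le_of_le' tendsto_const_nhds hup
  · filter_upwards [self_mem_nhdsWithin] with δ (hδ : 0 < δ)
    have : 0 ≤ ∫ t in (-T)..T, |t| ^ β * |Ω (δ / t)| := by
      apply intervalIntegral.integral_nonneg (by linarith)
      intro t _; positivity
    positivity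
  · filter_upwards [self_mem_nhdsWithin] with δ (hδ : 0 < δ)
    have hI : (∫ t in (-T)..T, |t| ^ β * |Ω (δ / t)|) ≤ 2 * T * (C * δ ^ β) := by
      have h := intervalIntegral.integral_mono_on (by linarith : (-T : ℝ) ≤ T)
        (hint δ hδ) intervalIntegrable_const
        (fun t _ => flux_pointwise_bound β K ξ0 hβn hK hξ0 Ω hbdd hdecay δ hδ t)
      simpa [mul_comm, mul_assoc, two_mul] using h.trans_eq (by
        rw [intervalIntegral.integral_const]; ring_nf; ring)
    calc δ ^ m * ∫ t in (-T)..T, |t| ^ β * |Ω (δ / t)|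
        ≤ δ ^ m * (2 * T * (C * δ ^ β)) := by
          apply mul_le_mul_of_nonneg_left hI (by positivity)
      _ = 2 * T * C * δ ^ ((m : ℝ) + β) := by
          rw [Real.rpow_add hδ, Real.rpow_natCast]; ring
end
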